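/- arXiv:2402.13755 — 3 statements merged into one kernel-verified Lean document; each statement's English description precedes it below -/
import Mathlib

section
/- For any ε > 0, a graph G = (V,E) with arboricity α has at least ε|V|/(2+ε) vertices of degree at most (2+ε)·α. -/
open Classical

variable {V : Type*}

/-- `G` has arboricity at most `a`: every subgraph `H` with at least `2` vertices
satisfies `⌈|E(H)|/(|V(H)|-1)⌉ ≤ a`, i.e. `|E(H)| ≤ a * (|V(H)| - 1)`. -/
def HasArboricity (G : SimpleGraph V) (a : ℕ) : Prop :=
  ∀ H : G.Subgraph, 2 ≤ H.verts.ncard → H.edgeSet.ncard ≤ a * (H.verts.ncard - 1)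

/-- Vertices assigned a layer `≤ i` in the iterative construction of the
`S`-induced `β`-partition. -/
noncomputable def assignedUpTo (G : SimpleGraph V) (S : Set V) (β : ℕ) : ℕ → Set V
  | 0 => {v | v ∈ S ∧ (G.neighborSet v).ncard ≤ β}
  | (i+1) => assignedUpTo G S β i ∪
      {v | v ∈ S ∧ ((G.neighborSet v) \ assignedUpTo G S β i).ncard ≤ β}

/-- The `S`-induced `β`-partition `σ_{S,β} : V → ℕ∞`. -/
noncomputable def indSigma (G : SimpleGraph V) (S : Set V) (β : ℕ) (v : V) : ℕ∞ :=
  if _h : ∃ i, v ∈ assignedUpTo G S β i then (sInf {i | v ∈ assignedUpTo G S β i} : ℕ) else ⊤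

/-- Auxiliary definition of the dependency graph, by fuel on the layer. -/
noncomputable def depAux (G : SimpleGraph V) (σ : V → ℕ∞) : ℕ → V → Set V
  | 0, v => if σ v = 0 then {v} else ∅
  | (n+1), v => if σ v = ((n+1 : ℕ) : ℕ∞)
      then insert v (⋃ w ∈ {w | G.Adj v w ∧ σ w < σ v}, depAux G σ n w)
      else depAux G σ n v

/-- The dependency graph `D(σ, v)`. -/
noncomputable def depGraph (G : SimpleGraph V) (σ : V → ℕ∞) (v : V) : Set V :=
  depAux G σ (σ v).toNat v

/-- A partial `β`-partition: every node with finite layer has at most `β`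
neighbors in equal or higher layers. -/
def IsPartialBetaPartition (G : SimpleGraph V) (β : ℕ) (lam : V → ℕ∞) : Prop :=
  ∀ v, lam v ≠ ⊤ → {w | G.Adj v w ∧ lam v ≤ lam w}.ncard ≤ β

/-!
Taking `H = G` in the arboricity bound gives `|E| ≤ α (|V| - 1)`, so the average degree is
at most `2α`. By Markov's inequality at most `2|V|/(2+ε)` vertices have degree above
`(2+ε)α`, and the remaining ones are the low-degree vertices.
-/

open Finset

-- The threshold is strict so that the case `m = 0` needs no exception.
theorem Finset.mul_card_filter_lt_le {ι : Type*} (s : Finset ι) (f : ι → ℝ) {m c : ℝ}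
    (hf : ∀ i ∈ s, 0 ≤ f i) (hsum : ∑ i ∈ s, f i ≤ m * #s) :
    c * #{i ∈ s | c * m < f i} ≤ #s := by
  set B := {i ∈ s | c * m < f i}
  rcases B.eq_empty_or_nonempty with hB | hB
  · simp [hB]
  have hlt : #B * (c * m) < ∑ i ∈ B, f i := by
    simpa using sum_lt_sum_of_nonempty hB fun i hi => (mem_filter.1 hi).2
  have hBs : ∑ i ∈ B, f i ≤ ∑ i ∈ s, f i :=
    sum_le_sum_of_subset_of_nonneg (filter_subset _ s) fun i hi _ => hf i hi
  have hs : (0 : ℝ) < #s := by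
    exact_mod_cast hB.card_pos.trans_le (card_le_card (filter_subset _ s))
  have hm : 0 ≤ m := by
    have := sum_nonneg hf
    nlinarith
  nlinarith

theorem SimpleGraph.ncard_neighborSet_eq_degree (G : SimpleGraph V) (v : V)
    [Fintype (G.neighborSet v)] : (G.neighborSet v).ncard = G.degree v := by
  rw [← Nat.card_coe_set_eq, Nat.card_eq_fintype_card, card_neighborSet_eq_degree]

namespace HasArboricity

variable {G : SimpleGraph V} {a : ℕ} [Fintype V] [DecidableRel G.Adj]

theorem card_edgeFinset_le (hG : HasArboricity G a) :
    #G.edgeFinset ≤ a * (Fintype.card V - 1) := by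
  by_cases hV : 2 ≤ Fintype.card V
  · have := hG ⊤ <| by
      rwa [SimpleGraph.Subgraph.verts_top, Set.ncard_univ, Nat.card_eq_fintype_card]
    rwa [SimpleGraph.Subgraph.edgeSet_top, ← G.coe_edgeFinset, Set.ncard_coe_finset,
      SimpleGraph.Subgraph.verts_top, Set.ncard_univ, Nat.card_eq_fintype_card] at this
  · have : (Fintype.card V).choose 2 = 0 := Nat.choose_eq_zero_of_lt (by omega)
    have := G.card_edgeFinset_le_card_choose_two
    omega

theorem sum_degrees_le (hG : HasArboricity G a) :
    ∑ v, G.degree v ≤ 2 * a * Fintype.card V := by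
  rw [G.sum_degrees_eq_twice_card_edges, mul_assoc]
  exact Nat.mul_le_mul_left 2 (hG.card_edgeFinset_le.trans (Nat.mul_le_mul_left a (Nat.sub_le _ _)))

end HasArboricity

/-- For any `ε > 0`, a graph with arboricity `α` has at least
`ε|V|/(2+ε)` vertices of degree at most `(2+ε)·α`. -/
theorem many_low_degree_vertices [Fintype V] (G : SimpleGraph V) (a : ℕ)
    (ε : ℝ) (hε : 0 < ε) (hG : HasArboricity G a) :
    ε * (Fintype.card V) / (2 + ε)
      ≤ ({v : V | ((G.neighborSet v).ncard : ℝ) ≤ (2 + ε) * a}.ncard : ℝ) := by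
  set c := (2 + ε) / 2 with hc
  have hthreshold : (2 + ε) * (a : ℝ) = c * (2 * a) := by ring
  simp_rw [hthreshold, G.ncard_neighborSet_eq_degree, Set.ncard_eq_toFinset_card',
    Set.toFinset_ofPred]
  have hsum : ∑ v, (G.degree v : ℝ) ≤ 2 * a * #(univ : Finset V) := by
    exact_mod_cast hG.sum_degrees_le
  have hhigh : c * #{v | c * (2 * a) < (G.degree v : ℝ)} ≤ Fintype.card V :=
    univ.mul_card_filter_lt_le _ (fun v _ => by positivity) hsum
  have hsplit := card_filter_add_card_filter_not (s := univ)
    fun v => (G.degree v : ℝ) ≤ c * (2 * a)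
  simp only [not_le, card_univ] at hsplit
  rw [div_le_iff₀ (by linarith)]
  rify at hsplit
  nlinarith [hc]
end

section
/- Let σ = σ_{S,β} be the S-induced β-partition of a graph G. For every node v ∈ S with σ(v) ≠ ∞ and deg_G(v) ≥ β+1, there are at least β+1 neighbors w of v with σ(w) ≥ σ(v) − 1. -/
open Classical

variable {V : Type*}

/-!
If `σ(v) = k + 2`, then `v` was not assigned in round `k + 1`, so more than `β` of its neighbors
were still unassigned after round `k`; each of them has `σ ≥ k + 1 = σ(v) - 1`.
If `σ(v) ≤ 1`, every neighbor qualifies and the degree bound is all that is needed.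
-/

section

variable {G : SimpleGraph V} {S : Set V} {β : ℕ}

lemma assignedUpTo_mono : Monotone (assignedUpTo G S β) :=
  monotone_nat_of_le_succ fun _ => Set.subset_union_left

lemma indSigma_le_iff {w : V} {n : ℕ} :
    indSigma G S β w ≤ n ↔ w ∈ assignedUpTo G S β n := by
  unfold indSigma
  split
  case isTrue hex =>
    rw [Nat.cast_le]
    exact ⟨fun hle => assignedUpTo_mono hle (Nat.sInf_mem hex), fun hw => Nat.sInf_le hw⟩
  case isFalse hex =>
    simpa using fun hw => hex ⟨n, hw⟩

lemma lt_indSigma_iff {w : V} {n : ℕ} : n < indSigma G S β w ↔ w ∉ assignedUpTo G S β n := by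
  rw [← indSigma_le_iff, not_le]

lemma lt_ncard_neighborSet_diff_of_notMem_assignedUpTo_succ {v : V} {k : ℕ} (hv : v ∈ S)
    (hk : v ∉ assignedUpTo G S β (k + 1)) :
    β < (G.neighborSet v \ assignedUpTo G S β k).ncard :=
  lt_of_not_ge fun hle => hk (Or.inr ⟨hv, hle⟩)

lemma neighborSet_diff_assignedUpTo_subset {v : V} {k : ℕ}
    (hv : indSigma G S β v = (k + 2 : ℕ)) :
    G.neighborSet v \ assignedUpTo G S β k ⊆
      {w | G.Adj v w ∧ indSigma G S β v ≤ indSigma G S β w + 1} := by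
  rintro w ⟨hadj, hw⟩
  refine ⟨hadj, ?_⟩
  calc indSigma G S β v = (k + 1 : ℕ) + 1 := by rw [hv]; push_cast; ring
    _ ≤ indSigma G S β w + 1 := by
      gcongr
      exact Order.add_one_le_of_lt (lt_indSigma_iff.mpr hw)

end

theorem indSigma_many_nearly_higher_neighbors_general (G : SimpleGraph V) (S : Set V) (β : ℕ)
    (v : V) (hv : v ∈ S) (h : indSigma G S β v ≠ ⊤)
    (hdeg : β + 1 ≤ (G.neighborSet v).ncard) :
    β + 1 ≤ {w | G.Adj v w ∧ indSigma G S β v ≤ indSigma G S β w + 1}.ncard := by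
  set T := {w | G.Adj v w ∧ indSigma G S β v ≤ indSigma G S β w + 1}
  have hT : T.Finite :=
    (Set.finite_of_ncard_pos (by omega : 0 < (G.neighborSet v).ncard)).subset fun _ hw => hw.1
  obtain ⟨i, hi⟩ := ENat.ne_top_iff_exists.mp h
  obtain hi1 | ⟨k, rfl⟩ : i ≤ 1 ∨ ∃ k, i = k + 2 := by
    rcases i with _ | _ | k <;> simp
  · have hall : G.neighborSet v ⊆ T :=
      fun w hadj => ⟨hadj, by rw [← hi]; exact le_add_left (by exact_mod_cast hi1)⟩
    exact hdeg.trans (Set.ncard_le_ncard hall hT)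
  · have hk : v ∉ assignedUpTo G S β (k + 1) :=
      lt_indSigma_iff.mp (by rw [← hi]; exact_mod_cast Nat.lt_succ_self _)
    exact (lt_ncard_neighborSet_diff_of_notMem_assignedUpTo_succ hv hk).trans_le
      (Set.ncard_le_ncard (neighborSet_diff_assignedUpTo_subset hi.symm) hT)

/-- If `σ_{S,β}(v) ≠ ∞` for `v ∈ S` and `deg(v) ≥ β+1`, then at least
`β+1` neighbors `w` of `v` satisfy `σ_{S,β}(w) ≥ σ_{S,β}(v) - 1`. -/
theorem indSigma_many_nearly_higher_neighbors (G : SimpleGraph V) (S : Set V) (β : ℕ)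
    (hβ : 1 ≤ β) (v : V) (hv : v ∈ S) (h : indSigma G S β v ≠ ⊤)
    (hdeg : β + 1 ≤ (G.neighborSet v).ncard) :
    β + 1 ≤ {w | G.Adj v w ∧ indSigma G S β v ≤ indSigma G S β w + 1}.ncard :=
  indSigma_many_nearly_higher_neighbors_general G S β v hv h hdeg
end

section
/- Monotonicity of induced β-partitions: for subsets S ⊆ T ⊆ V of a graph G and any β ≥ 1, σ_{S,β}(v) ≥ σ_{T,β}(v) for every node v ∈ V (with the convention ∞ ≥ k for all k ∈ ℕ). -/
/-! By induction on `i`, the set of vertices placed in layers `≤ i` grows with `S`: a larger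
earlier layer leaves fewer unassigned neighbours. Since `σ_{S,β}(v) ≤ i` holds exactly when `v`
lies in that set, the layers of `T` can only come earlier. -/

open Classical

variable {V : Type*}

namespace SimpleGraph

lemma assignedUpTo_mono (G : SimpleGraph V) (S : Set V) (β : ℕ) :
    Monotone (assignedUpTo G S β) :=
  monotone_nat_of_le_succ fun _ => Set.subset_union_left

variable {G : SimpleGraph V} {S T : Set V} {β : ℕ}

/-- `Set.ncard` is `0` on infinite sets. -/
lemma mem_assignedUpTo_zero_of_infinite {v : V} (hvS : v ∈ S)
    (hinf : (G.neighborSet v).Infinite) : v ∈ assignedUpTo G S β 0 :=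
  ⟨hvS, by simp [hinf.ncard]⟩

lemma assignedUpTo_subset_of_subset (hST : S ⊆ T) (i : ℕ) :
    assignedUpTo G S β i ⊆ assignedUpTo G T β i := by
  induction i with
  | zero => exact fun v ⟨hvS, hcard⟩ => ⟨hST hvS, hcard⟩
  | succ i ih =>
    rintro v (hv | ⟨hvS, hcard⟩)
    · exact Or.inl (ih hv)
    · rcases (G.neighborSet v).finite_or_infinite with hfin | hinf
      · exact Or.inr ⟨hST hvS,
          (Set.ncard_le_ncard (Set.sdiff_subset_sdiff_right ih) hfin.sdiff).trans hcard⟩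
      · exact assignedUpTo_mono G T β (Nat.zero_le _)
          (mem_assignedUpTo_zero_of_infinite (hST hvS) hinf)

lemma indSigma_le_coe_iff {v : V} {i : ℕ} :
    indSigma G S β v ≤ i ↔ v ∈ assignedUpTo G S β i := by
  unfold indSigma
  split_ifs with h
  · rw [Nat.cast_le]
    exact ⟨fun hle => assignedUpTo_mono G S β hle (Nat.sInf_mem h), fun hv => Nat.sInf_le hv⟩
  · simp [not_exists.mp h]

end SimpleGraph

open SimpleGraph in
theorem indSigma_antitone_general (G : SimpleGraph V) (S T : Set V) (β : ℕ)
    (hST : S ⊆ T) :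
    ∀ v : V, indSigma G T β v ≤ indSigma G S β v := by
  intro v
  cases h : indSigma G S β v with
  | top => exact le_top
  | coe k =>
    exact indSigma_le_coe_iff.2 (assignedUpTo_subset_of_subset hST k (indSigma_le_coe_iff.1 h.le))

/-- Monotonicity of induced `β`-partitions: for `S ⊆ T ⊆ V`,
`σ_{S,β}(v) ≥ σ_{T,β}(v)` for every node `v`. -/
theorem indSigma_antitone (G : SimpleGraph V) (S T : Set V) (β : ℕ)
    (hβ : 1 ≤ β) (hST : S ⊆ T) :
    ∀ v : V, indSigma G T β v ≤ indSigma G S β v :=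
  indSigma_antitone_general G S T β hST
end
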